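/- arXiv:1401.6480 — 3 statements merged into one kernel-verified Lean document; each statement's English description precedes it below -/
import Mathlib

section
/- Let u ∈ C²(B_{2R}(0)) satisfy Δu ≥ M·u and 0 ≤ u ≤ 1 in the ball B_{2R}(0) ⊂ ℝ^d, where M > 0. Then there exist dimensional constants C, c > 0 such that sup_{B_R(0)} u ≤ C·e^{-c R √M}. -/
/-!
Halving argument. With `t = √(2(d+1)/M)`, the function
`w y = K (1 + ∑ⱼ cosh (√M (yⱼ - bⱼ)))` satisfies `Δw ≤ M w`, equals `K (d+1)` at `b`, and, since
`cosh s ≥ 1 + s²/2`, is at least `2K (d+1)` on the sphere `‖y - b‖ = t`. If `u ≤ m` on the closed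
ball `B̄_t(b)`, the maximum principle for `Δ - M`, applied to `u - w` with `K = m / (2(d+1))`,
gives `u(b) ≤ m/2`. Iterating, `u ≤ 2^{-k}` on `B_{2R - kt}(0)`, and `k = ⌊R/t⌋` steps reach
`B_R(0)`.
-/

/-- The Laplacian of `f : ℝ^d → ℝ`, as the sum of pure second derivatives in the
coordinate directions. -/
noncomputable def lap {d : ℕ} (f : EuclideanSpace ℝ (Fin d) → ℝ)
    (x : EuclideanSpace ℝ (Fin d)) : ℝ :=
  ∑ i : Fin d,
    fderiv ℝ (fun y => fderiv ℝ f y (EuclideanSpace.single i 1)) x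
      (EuclideanSpace.single i 1)

open Filter Metric Real Topology

theorem IsLocalMax.deriv_deriv_nonpos {g : ℝ → ℝ} {x : ℝ} (hmax : IsLocalMax g x)
    (hg : ContinuousAt g x) : deriv (deriv g) x ≤ 0 := by
  by_contra! hpos
  -- `x` would also be a local minimum, so `g` would be locally constant
  have hmin := isLocalMin_of_deriv_deriv_pos hpos hmax.deriv_eq_zero hg
  have hconst : g =ᶠ[𝓝 x] fun _ => g x := by
    filter_upwards [hmax, hmin] with y h₁ h₂ using le_antisymm h₁ h₂
  have : deriv (deriv g) x = 0 := by
    rw [(hconst.deriv).deriv_eq]; simp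
  exact hpos.ne' this

section
variable {E : Type*} [NormedAddCommGroup E] [NormedSpace ℝ E]

theorem differentiableAt_fderiv_apply {f : E → ℝ} {p : E} (hf : ContDiffAt ℝ 2 f p) (v : E) :
    DifferentiableAt ℝ (fun y => fderiv ℝ f y v) p :=
  ((hf.fderiv_right (m := 1) (by norm_num)).differentiableAt one_ne_zero).clm_apply
    (differentiableAt_const v)

theorem IsLocalMax.fderiv_fderiv_apply_nonpos {f : E → ℝ} {p : E} (hmax : IsLocalMax f p)
    (hf : ContDiffAt ℝ 2 f p) (v : E) :
    fderiv ℝ (fun y => fderiv ℝ f y v) p v ≤ 0 := by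
  set γ : ℝ → E := fun t => p + t • v
  have hγ : ∀ t, HasDerivAt γ v t := fun t => by
    simpa [γ] using ((hasDerivAt_id t).smul_const v).const_add p
  have hγ0 : γ 0 = p := by simp [γ]
  have hγc : Continuous γ := by fun_prop
  have hdiff : ∀ᶠ t in 𝓝 (0 : ℝ), DifferentiableAt ℝ f (γ t) := by
    have := hf.eventually (by simp)
    rw [← hγ0] at this
    exact (hγc.tendsto 0).eventually (this.mono fun y hy => hy.differentiableAt (by simp))
  have hderiv : deriv (f ∘ γ) =ᶠ[𝓝 0] (fun y => fderiv ℝ f y v) ∘ γ :=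
    hdiff.mono fun t ht => (ht.hasFDerivAt.comp_hasDerivAt t (hγ t)).deriv
  have hsecond : HasDerivAt ((fun y => fderiv ℝ f y v) ∘ γ)
      (fderiv ℝ (fun y => fderiv ℝ f y v) p v) 0 := by
    have h1 := differentiableAt_fderiv_apply hf v
    rw [← hγ0] at h1 ⊢
    exact h1.hasFDerivAt.comp_hasDerivAt 0 (hγ 0)
  rw [← hsecond.deriv, ← hderiv.deriv_eq]
  refine IsLocalMax.deriv_deriv_nonpos ?_ ?_
  · exact (hγ0 ▸ hmax).comp_continuous hγc.continuousAt
  · exact (hγ0 ▸ hf.continuousAt).comp hγc.continuousAt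

end

variable {d : ℕ}

theorem IsLocalMax.lap_nonpos {f : EuclideanSpace ℝ (Fin d) → ℝ} {p : EuclideanSpace ℝ (Fin d)}
    (hmax : IsLocalMax f p) (hf : ContDiffAt ℝ 2 f p) : lap f p ≤ 0 :=
  Finset.sum_nonpos fun _ _ => hmax.fderiv_fderiv_apply_nonpos hf _

theorem lap_sub {f g : EuclideanSpace ℝ (Fin d) → ℝ} {p : EuclideanSpace ℝ (Fin d)}
    (hf : ContDiffAt ℝ 2 f p) (hg : ContDiffAt ℝ 2 g p) :
    lap (f - g) p = lap f p - lap g p := by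
  have hfg : ∀ v, (fun y => fderiv ℝ (f - g) y v) =ᶠ[𝓝 p]
      (fun y => fderiv ℝ f y v) - (fun y => fderiv ℝ g y v) := fun v => by
    filter_upwards [hf.eventually (by simp), hg.eventually (by simp)] with y hfy hgy
    simp [fderiv_sub (hfy.differentiableAt (by simp)) (hgy.differentiableAt (by simp))]
  simp only [lap, ← Finset.sum_sub_distrib]
  refine Finset.sum_congr rfl fun i _ => ?_
  rw [(hfg _).fderiv_eq, fderiv_sub (differentiableAt_fderiv_apply hf _)
    (differentiableAt_fderiv_apply hg _)]
  rfl

theorem hasFDerivAt_apply_coord {G : ℝ → ℝ} {G' : ℝ} {y : EuclideanSpace ℝ (Fin d)} {i : Fin d}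
    (hG : HasDerivAt G G' (y i)) :
    HasFDerivAt (fun x : EuclideanSpace ℝ (Fin d) => G (x i))
      (G' • EuclideanSpace.proj (𝕜 := ℝ) i) y :=
  hG.comp_hasFDerivAt y (EuclideanSpace.proj i : EuclideanSpace ℝ (Fin d) →L[ℝ] ℝ).hasFDerivAt

theorem fderiv_const_add_sum_coord_single {F F' : Fin d → ℝ → ℝ}
    (hF : ∀ j s, HasDerivAt (F j) (F' j s) s) (c : ℝ) (y : EuclideanSpace ℝ (Fin d)) (i : Fin d) :
    fderiv ℝ (fun x : EuclideanSpace ℝ (Fin d) => c + ∑ j, F j (x j)) y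
      (EuclideanSpace.single i 1) = F' i (y i) := by
  have hsum := HasFDerivAt.fun_sum (u := Finset.univ) fun j _ =>
    hasFDerivAt_apply_coord (hF j (y j))
  rw [(hsum.const_add c).fderiv]
  simp

theorem lap_const_add_sum_coord {F F' F'' : Fin d → ℝ → ℝ}
    (hF : ∀ j s, HasDerivAt (F j) (F' j s) s) (hF' : ∀ j s, HasDerivAt (F' j) (F'' j s) s)
    (c : ℝ) (x : EuclideanSpace ℝ (Fin d)) :
    lap (fun y => c + ∑ j, F j (y j)) x = ∑ j, F'' j (x j) := by
  refine Finset.sum_congr rfl fun i _ => ?_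
  simp only [fderiv_const_add_sum_coord_single hF]
  rw [(hasFDerivAt_apply_coord (hF' i (x i))).fderiv]
  simp

theorem one_add_sq_div_two_le_cosh (x : ℝ) : 1 + x ^ 2 / 2 ≤ cosh x := by
  have hsinh : (x / 2) ^ 2 ≤ sinh (x / 2) ^ 2 := by
    rw [← sq_abs, ← sq_abs (sinh _), abs_sinh]
    exact pow_le_pow_left₀ (abs_nonneg _) (self_le_sinh_iff.mpr (abs_nonneg _)) 2
  have hcosh : cosh x = 1 + 2 * sinh (x / 2) ^ 2 := by
    rw [show x = 2 * (x / 2) by ring, cosh_two_mul, cosh_sq]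
    ring_nf
  nlinarith

noncomputable def coshBarrier (a K : ℝ) (b : EuclideanSpace ℝ (Fin d))
    (y : EuclideanSpace ℝ (Fin d)) : ℝ :=
  K + ∑ j, K * cosh (a * (y j - b j))

section coshBarrier
variable (a K : ℝ) (b : EuclideanSpace ℝ (Fin d))

theorem contDiff_coshBarrier : ContDiff ℝ 2 (coshBarrier a K b) := by
  unfold coshBarrier
  fun_prop

theorem lap_coshBarrier (x : EuclideanSpace ℝ (Fin d)) :
    lap (coshBarrier a K b) x = a ^ 2 * (coshBarrier a K b x - K) := by
  have hF : ∀ j s, HasDerivAt (fun s => K * cosh (a * (s - b j)))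
      (K * a * sinh (a * (s - b j))) s :=
    fun j s => by
      simpa [mul_comm, mul_left_comm, mul_assoc] using
        ((((hasDerivAt_id s).sub_const (b j)).const_mul a).cosh).const_mul K
  have hF' : ∀ j s, HasDerivAt (fun s => K * a * sinh (a * (s - b j)))
      (a ^ 2 * (K * cosh (a * (s - b j)))) s :=
    fun j s => by
      simpa [sq, mul_comm, mul_left_comm, mul_assoc] using
        ((((hasDerivAt_id s).sub_const (b j)).const_mul a).sinh).const_mul (K * a)
  rw [coshBarrier, add_sub_cancel_left, Finset.mul_sum]
  exact lap_const_add_sum_coord hF hF' K x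

theorem coshBarrier_self : coshBarrier a K b b = K * (d + 1) := by
  simp only [coshBarrier, sub_self, mul_zero, cosh_zero, mul_one, Finset.sum_const,
    Finset.card_univ, Fintype.card_fin, nsmul_eq_mul]
  ring

theorem le_coshBarrier {K : ℝ} (hK : 0 ≤ K) (y : EuclideanSpace ℝ (Fin d)) :
    K * (d + 1 + a ^ 2 * ‖y - b‖ ^ 2 / 2) ≤ coshBarrier a K b y := by
  calc K * (d + 1 + a ^ 2 * ‖y - b‖ ^ 2 / 2)
      = K + ∑ j, K * (1 + (a * (y j - b j)) ^ 2 / 2) := by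
        simp only [EuclideanSpace.real_norm_sq_eq, PiLp.sub_apply, mul_add, mul_one, mul_pow,
          Finset.sum_add_distrib, Finset.sum_const, Finset.card_univ, Fintype.card_fin,
          nsmul_eq_mul, ← Finset.mul_sum, ← Finset.sum_div]
        ring
    _ ≤ coshBarrier a K b y := by
        unfold coshBarrier
        gcongr with j
        exact one_add_sq_div_two_le_cosh _

end coshBarrier

theorem nonpos_of_mul_le_lap {M : ℝ} (hM : 0 < M) {U : Set (EuclideanSpace ℝ (Fin d))}
    (hU : IsOpen U) {b : EuclideanSpace ℝ (Fin d)} {r : ℝ} (hsub : closedBall b r ⊆ U)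
    {f : EuclideanSpace ℝ (Fin d) → ℝ} (hf : ContDiffOn ℝ 2 f U)
    (hlap : ∀ x ∈ ball b r, M * f x ≤ lap f x) (hsphere : ∀ x ∈ sphere b r, f x ≤ 0)
    {x : EuclideanSpace ℝ (Fin d)} (hx : x ∈ closedBall b r) : f x ≤ 0 := by
  obtain ⟨p, hp, hpmax⟩ := (isCompact_closedBall b r).exists_isMaxOn ⟨x, hx⟩
    (hf.continuousOn.mono hsub)
  by_contra! hfx
  have hfp : 0 < f p := hfx.trans_le (hpmax hx)
  have hpball : p ∈ ball b r := by
    rcases (mem_closedBall.mp hp).lt_or_eq with h | h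
    · exact h
    · exact absurd (hsphere p h) hfp.not_ge
  have hlocmax : IsLocalMax f p :=
    hpmax.isLocalMax (mem_of_superset (isOpen_ball.mem_nhds hpball) ball_subset_closedBall)
  have := hlocmax.lap_nonpos (hf.contDiffAt (hU.mem_nhds (hsub hp)))
  nlinarith [hlap p hpball]

theorem le_half_of_le_on_closedBall {M : ℝ} (hM : 0 < M) {U : Set (EuclideanSpace ℝ (Fin d))}
    (hU : IsOpen U) {b : EuclideanSpace ℝ (Fin d)} {t : ℝ} (ht : 0 ≤ t)
    (hsub : closedBall b t ⊆ U)
    (htM : 2 * (d + 1) ≤ M * t ^ 2) {u : EuclideanSpace ℝ (Fin d) → ℝ}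
    (hu : ContDiffOn ℝ 2 u U) (hlap : ∀ x ∈ U, M * u x ≤ lap u x) {m : ℝ} (hm : 0 ≤ m)
    (hle : ∀ x ∈ closedBall b t, u x ≤ m) : u b ≤ m / 2 := by
  set K := m / (2 * (d + 1))
  have hK : 0 ≤ K := by positivity
  set w := coshBarrier (√M) K b
  have hw : ContDiff ℝ 2 w := contDiff_coshBarrier _ _ _
  have hlapw : ∀ x, lap w x ≤ M * w x := fun x => by
    rw [lap_coshBarrier, sq_sqrt hM.le]
    nlinarith
  have hcmp : (u - w) b ≤ 0 := by
    refine nonpos_of_mul_le_lap hM hU hsub (f := u - w) (hu.sub hw.contDiffOn) (fun x hx => ?_)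
      (fun y hy => ?_) (mem_closedBall_self ?_)
    · have hxU := hsub (ball_subset_closedBall hx)
      rw [lap_sub (hu.contDiffAt (hU.mem_nhds hxU)) hw.contDiffAt, Pi.sub_apply, mul_sub]
      linarith [hlap x hxU, hlapw x]
    · have hwy := le_coshBarrier (√M) b hK y
      rw [sq_sqrt hM.le, mem_sphere_iff_norm.mp hy] at hwy
      have hKm : K * (2 * (d + 1)) = m := by simp only [K]; field_simp
      have : K * (2 * (d + 1)) ≤ K * (d + 1 + M * t ^ 2 / 2) := by gcongr; linarith
      rw [Pi.sub_apply]
      linarith [hle y (sphere_subset_closedBall hy)]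
    · exact ht
  have hwb : w b = m / 2 := by
    simp only [w, coshBarrier_self, K]
    field_simp
  rw [Pi.sub_apply, hwb] at hcmp
  linarith

theorem le_half_pow_of_norm_lt {M ρ t : ℝ} (hM : 0 < M) (ht : 0 ≤ t)
    (htM : 2 * (d + 1) ≤ M * t ^ 2) {u : EuclideanSpace ℝ (Fin d) → ℝ}
    (hu : ContDiffOn ℝ 2 u (ball 0 ρ)) (hlap : ∀ x ∈ ball 0 ρ, M * u x ≤ lap u x)
    (hle : ∀ x ∈ ball 0 ρ, u x ≤ 1) (k : ℕ) {x : EuclideanSpace ℝ (Fin d)}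
    (hx : ‖x‖ < ρ - k * t) : u x ≤ (1 / 2) ^ k := by
  induction k generalizing x with
  | zero => exact pow_zero (1 / 2 : ℝ) ▸ hle x (mem_ball_zero_iff.mpr (by simpa using hx))
  | succ k ih =>
    have hsub : closedBall x t ⊆ ball 0 (ρ - k * t) :=
      closedBall_subset_ball' (by rw [dist_zero_right]; push_cast at hx; linarith)
    have hρ : ball (0 : EuclideanSpace ℝ (Fin d)) (ρ - k * t) ⊆ ball 0 ρ :=
      ball_subset_ball (by nlinarith [k.cast_nonneg (α := ℝ)])
    rw [pow_succ, ← div_eq_mul_one_div]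
    exact le_half_of_le_on_closedBall hM isOpen_ball ht (hsub.trans hρ) htM hu hlap
      (by positivity) fun y hy => ih (mem_ball_zero_iff.mp (hsub hy))

theorem half_pow_floor_le (x : ℝ) :
    (1 / 2 : ℝ) ^ ⌊x⌋₊ ≤ 2 * exp (-log 2 * x) := by
  have hfloor : x < ⌊x⌋₊ + 1 := Nat.lt_floor_add_one x
  have hlog : 0 < log 2 := log_pos one_lt_two
  calc (1 / 2 : ℝ) ^ ⌊x⌋₊ = exp (-log 2 * ⌊x⌋₊) := by
        rw [one_div, inv_pow, ← exp_log (by positivity : (0 : ℝ) < 2 ^ ⌊x⌋₊), ← exp_neg, log_pow]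
        ring_nf
    _ ≤ exp (log 2 + -log 2 * x) := exp_le_exp.mpr (by nlinarith)
    _ = 2 * exp (-log 2 * x) := by rw [exp_add, exp_log two_pos]

/-- Exponential decay estimate: if `Δu ≥ M u` and `0 ≤ u ≤ 1` in `B_{2R}(0)`, then
`sup_{B_R} u ≤ C e^{-c R √M}` with dimensional constants `C, c`. -/
theorem exponential_decay (d : ℕ) :
    ∃ C > 0, ∃ c > 0, ∀ R M : ℝ, 0 < R → 0 < M →
      ∀ u : EuclideanSpace ℝ (Fin d) → ℝ,
        ContDiffOn ℝ 2 u (Metric.ball 0 (2*R)) →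
        (∀ x ∈ Metric.ball (0 : EuclideanSpace ℝ (Fin d)) (2*R), M * u x ≤ lap u x) →
        (∀ x ∈ Metric.ball (0 : EuclideanSpace ℝ (Fin d)) (2*R), 0 ≤ u x ∧ u x ≤ 1) →
        ∀ x ∈ Metric.ball (0 : EuclideanSpace ℝ (Fin d)) R,
          u x ≤ C * Real.exp (-c * R * Real.sqrt M) := by
  refine ⟨2, two_pos, log 2 / √(2 * (d + 1)), by positivity, ?_⟩
  intro R M hR hM u hu hlap hbd x hx
  set t := √(2 * (d + 1)) / √M
  have ht : 0 < t := by positivity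
  have htM : 2 * (d + 1) ≤ M * t ^ 2 := by
    rw [div_pow, sq_sqrt (by positivity), sq_sqrt hM.le, mul_div_cancel₀ _ hM.ne']
  have hN : ⌊R / t⌋₊ * t ≤ R := (le_div_iff₀ ht).mp (Nat.floor_le (by positivity))
  have hxN : ‖x‖ < 2 * R - ⌊R / t⌋₊ * t := by linarith [mem_ball_zero_iff.mp hx]
  calc u x ≤ (1 / 2) ^ ⌊R / t⌋₊ :=
        le_half_pow_of_norm_lt hM ht.le htM hu hlap (fun y hy => (hbd y hy).2) _ hxN
    _ ≤ 2 * exp (-log 2 * (R / t)) := half_pow_floor_le _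
    _ = 2 * exp (-(log 2 / √(2 * (d + 1))) * R * √M) := by
        simp only [t]
        field_simp
end

section
/- Let Ω₀ ⊂ ℝ^d be open and convex, and let Φ_j : Ω₀ → ℝ be a sequence of differentiable functions converging uniformly on Ω₀ to a differentiable function Φ₀, such that for a fixed constant C, every function X ↦ Φ_j(X) - C|X - X_j|² is concave on Ω₀ (for some points X_j ∈ Ω₀ with X_j → X₀ ∈ Ω₀). Then ∇Φ_j(X_j) → ∇Φ₀(X₀). -/
/-!
Semiconcavity makes `∇Φ_j(X_j)` a supergradient of `Φ_j` at `X_j` up to a quadratic error: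
`Φ_j(X_j + t v) ≤ Φ_j(X_j) + t ∇Φ_j(X_j) v + C t² ‖v‖²`. Letting `j → ∞` at fixed `t > 0` and then
`t → 0⁺` gives `liminf ∇Φ_j(X_j) v ≥ ∇Φ₀(X₀) v`; applied to `v` and `-v` this is convergence of
every directional derivative, which in finite dimension is convergence of the gradients.
-/

open Filter Topology

theorem ContinuousLinearMap.tendsto_of_tendsto_apply {ι 𝕜 E F : Type*}
    [NontriviallyNormedField 𝕜] [CompleteSpace 𝕜]
    [NormedAddCommGroup E] [NormedSpace 𝕜 E] [FiniteDimensional 𝕜 E]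
    [NormedAddCommGroup F] [NormedSpace 𝕜 F] [FiniteDimensional 𝕜 F]
    {l : Filter ι} {L : ι → E →L[𝕜] F} {L₀ : E →L[𝕜] F}
    (h : ∀ v, Tendsto (fun i => L i v) l (𝓝 (L₀ v))) : Tendsto L l (𝓝 L₀) := by
  let b := Module.finBasis 𝕜 E
  let ev : (E →L[𝕜] F) →ₗ[𝕜] (Fin (Module.finrank 𝕜 E) → F) :=
    LinearMap.pi fun k => (ContinuousLinearMap.apply 𝕜 F (b k)).toLinearMap
  have hev : LinearMap.ker ev = ⊥ := by
    refine LinearMap.ker_eq_bot'.2 fun T hT => ?_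
    exact ContinuousLinearMap.coe_injective (b.ext fun k => congrFun hT k)
  rw [(LinearMap.isClosedEmbedding_of_injective hev).tendsto_nhds_iff, tendsto_pi_nhds]
  exact fun k => h (b k)

section
variable {E : Type*} [NormedAddCommGroup E] [NormedSpace ℝ E]

theorem ConcaveOn.le_add_fderiv_add_sq {s : Set E} {f : E → ℝ} {f' : E →L[ℝ] ℝ} {x y : E}
    {C : ℝ} (hf : ConcaveOn ℝ s fun z => f z - C * ‖z - x‖ ^ 2) (hx : x ∈ s) (hy : y ∈ s)
    (hf' : HasFDerivAt f f' x) :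
    f y ≤ f x + f' (y - x) + C * ‖y - x‖ ^ 2 := by
  set n := ‖y - x‖ ^ 2
  have hslope := (hf'.hasLineDerivAt (y - x)).tendsto_slope_zero_right
  have hbound : Tendsto (fun t : ℝ => f y - f x - C * n + C * t * n) (𝓝[>] 0)
      (𝓝 (f y - f x - C * n)) := by
    have : Continuous fun t : ℝ => f y - f x - C * n + C * t * n := by fun_prop
    simpa using (this.tendsto 0).mono_left nhdsWithin_le_nhds
  suffices f y - f x - C * n ≤ f' (y - x) by linarith
  refine le_of_tendsto_of_tendsto hbound hslope ?_
  filter_upwards [Ioo_mem_nhdsGT one_pos] with t ⟨ht0, ht1⟩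
  have hconc := hf.2 hx hy (sub_nonneg.2 ht1.le) ht0.le (sub_add_cancel 1 t)
  have hseg : (1 - t) • x + t • y = x + t • (y - x) := by
    rw [smul_sub, sub_smul, one_smul]; abel
  have hnorm : ‖x + t • (y - x) - x‖ ^ 2 = t ^ 2 * n := by
    rw [add_sub_cancel_left, norm_smul, Real.norm_of_nonneg ht0.le, mul_pow]
  simp only [hseg, hnorm, sub_self, norm_zero, smul_eq_mul] at hconc
  rw [smul_eq_mul, le_inv_mul_iff₀ ht0]
  nlinarith

variable {ι : Type*} {l : Filter ι} {s : Set E} {F : ι → E → ℝ} {f : E → ℝ}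
  {L : ι → E →L[ℝ] ℝ} {f' : E →L[ℝ] ℝ} {x : ι → E} {x₀ : E} {C : ℝ}

theorem eventually_lt_apply_of_le_add_apply_add_sq (hs : IsOpen s)
    (hF : TendstoUniformlyOn F f l s) (hf : ContinuousOn f s) (hf' : HasFDerivAt f f' x₀)
    (hx₀ : x₀ ∈ s) (hx : Tendsto x l (𝓝 x₀))
    (hL : ∀ i, ∀ y ∈ s, F i y ≤ F i (x i) + L i (y - x i) + C * ‖y - x i‖ ^ 2)
    (v : E) {a : ℝ} (ha : a < f' v) : ∀ᶠ i in l, a < L i v := by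
  set q : ℝ → ℝ := fun t => t⁻¹ * (f (x₀ + t • v) - f x₀) - C * t * ‖v‖ ^ 2
  have hq : Tendsto q (𝓝[>] 0) (𝓝 (f' v)) := by
    have hlin : Tendsto (fun t : ℝ => C * t * ‖v‖ ^ 2) (𝓝[>] 0) (𝓝 0) := by
      have : Continuous fun t : ℝ => C * t * ‖v‖ ^ 2 := by fun_prop
      simpa using (this.tendsto 0).mono_left nhdsWithin_le_nhds
    simpa [q] using ((hf'.hasLineDerivAt v).tendsto_slope_zero_right).sub hlin
  have hray : ∀ᶠ t in 𝓝[>] (0 : ℝ), x₀ + t • v ∈ s := by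
    have : Tendsto (fun t : ℝ => x₀ + t • v) (𝓝[>] 0) (𝓝 x₀) := by
      have : Continuous fun t : ℝ => x₀ + t • v := by fun_prop
      simpa using (this.tendsto 0).mono_left nhdsWithin_le_nhds
    exact this.eventually (hs.mem_nhds hx₀)
  obtain ⟨t, haq, hmem, ht⟩ :=
    ((hq.eventually (lt_mem_nhds ha)).and (hray.and self_mem_nhdsWithin)).exists
  have hlim : ∀ w, x₀ + w ∈ s → Tendsto (fun i => F i (x i + w)) l (𝓝 (f (x₀ + w))) :=
    fun w hw => hF.tendsto_comp (hf _ hw) (tendsto_nhdsWithin_iff.2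
      ⟨hx.add_const w, (hx.add_const w).eventually (hs.mem_nhds hw)⟩)
  have hQ : Tendsto (fun i => t⁻¹ * (F i (x i + t • v) - F i (x i)) - C * t * ‖v‖ ^ 2) l
      (𝓝 (q t)) := by
    have h0 := hlim 0 (by simpa using hx₀)
    simp only [add_zero] at h0
    exact (((hlim _ hmem).sub h0).const_mul t⁻¹).sub_const _
  filter_upwards [hQ.eventually (lt_mem_nhds haq),
    (hx.add_const (t • v)).eventually (hs.mem_nhds hmem)] with i hQi hmi
  have hsup := hL i _ hmi
  rw [add_sub_cancel_left, map_smul, smul_eq_mul, norm_smul, Real.norm_of_nonneg ht.le,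
    mul_pow] at hsup
  have hQle : t⁻¹ * (F i (x i + t • v) - F i (x i)) - C * t * ‖v‖ ^ 2 ≤ L i v := by
    rw [sub_le_iff_le_add, inv_mul_le_iff₀ ht]
    nlinarith
  exact hQi.trans_le hQle

theorem tendsto_apply_of_le_add_apply_add_sq (hs : IsOpen s)
    (hF : TendstoUniformlyOn F f l s) (hf : ContinuousOn f s) (hf' : HasFDerivAt f f' x₀)
    (hx₀ : x₀ ∈ s) (hx : Tendsto x l (𝓝 x₀))
    (hL : ∀ i, ∀ y ∈ s, F i y ≤ F i (x i) + L i (y - x i) + C * ‖y - x i‖ ^ 2) (v : E) :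
    Tendsto (fun i => L i v) l (𝓝 (f' v)) := by
  have hlower := eventually_lt_apply_of_le_add_apply_add_sq hs hF hf hf' hx₀ hx hL
  refine tendsto_order.2 ⟨fun a ha => hlower v ha, fun b hb => ?_⟩
  filter_upwards [hlower (-v) (a := -b) (by simpa using hb)] with i hi
  simpa using hi

end

theorem semiconcave_gradient_convergence_general {d : ℕ}
    (Ω₀ : Set (EuclideanSpace ℝ (Fin d))) (hopen : IsOpen Ω₀)
    (Φ : ℕ → EuclideanSpace ℝ (Fin d) → ℝ) (Φ₀ : EuclideanSpace ℝ (Fin d) → ℝ)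
    (Xj : ℕ → EuclideanSpace ℝ (Fin d)) (X₀ : EuclideanSpace ℝ (Fin d))
    (hX₀ : X₀ ∈ Ω₀) (hXj : ∀ j, Xj j ∈ Ω₀)
    (hXjlim : Filter.Tendsto Xj Filter.atTop (nhds X₀))
    (hdiff : ∀ j, DifferentiableOn ℝ (Φ j) Ω₀)
    (hdiff₀ : DifferentiableOn ℝ Φ₀ Ω₀)
    (hunif : TendstoUniformlyOn (fun j x => Φ j x) Φ₀ Filter.atTop Ω₀)
    (C : ℝ)
    (hconc : ∀ j, ConcaveOn ℝ Ω₀ (fun X => Φ j X - C * ‖X - Xj j‖ ^ 2)) :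
    Filter.Tendsto (fun j => fderiv ℝ (Φ j) (Xj j)) Filter.atTop
      (nhds (fderiv ℝ Φ₀ X₀)) := by
  have hsupergrad : ∀ j, ∀ Y ∈ Ω₀,
      Φ j Y ≤ Φ j (Xj j) + fderiv ℝ (Φ j) (Xj j) (Y - Xj j) + C * ‖Y - Xj j‖ ^ 2 :=
    fun j Y hY => (hconc j).le_add_fderiv_add_sq (hXj j) hY
      ((hdiff j).differentiableAt (hopen.mem_nhds (hXj j))).hasFDerivAt
  have hΦ₀' := (hdiff₀.differentiableAt (hopen.mem_nhds hX₀)).hasFDerivAt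
  exact ContinuousLinearMap.tendsto_of_tendsto_apply
    (tendsto_apply_of_le_add_apply_add_sq hopen hunif hdiff₀.continuousOn hΦ₀' hX₀ hXjlim
      hsupergrad)

/-- C¹ convergence of uniformly semi-concave functions: if differentiable `Φ_j`
converge uniformly on an open convex set to a differentiable `Φ₀`, each
`Φ_j(X) - C|X - X_j|²` is concave, and `X_j → X₀`, then `∇Φ_j(X_j) → ∇Φ₀(X₀)`. -/
theorem semiconcave_gradient_convergence {d : ℕ}
    (Ω₀ : Set (EuclideanSpace ℝ (Fin d))) (hopen : IsOpen Ω₀) (hconv : Convex ℝ Ω₀)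
    (Φ : ℕ → EuclideanSpace ℝ (Fin d) → ℝ) (Φ₀ : EuclideanSpace ℝ (Fin d) → ℝ)
    (Xj : ℕ → EuclideanSpace ℝ (Fin d)) (X₀ : EuclideanSpace ℝ (Fin d))
    (hX₀ : X₀ ∈ Ω₀) (hXj : ∀ j, Xj j ∈ Ω₀)
    (hXjlim : Filter.Tendsto Xj Filter.atTop (nhds X₀))
    (hdiff : ∀ j, DifferentiableOn ℝ (Φ j) Ω₀)
    (hdiff₀ : DifferentiableOn ℝ Φ₀ Ω₀)
    (hunif : TendstoUniformlyOn (fun j x => Φ j x) Φ₀ Filter.atTop Ω₀)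
    (C : ℝ)
    (hconc : ∀ j, ConcaveOn ℝ Ω₀ (fun X => Φ j X - C * ‖X - Xj j‖ ^ 2)) :
    Filter.Tendsto (fun j => fderiv ℝ (Φ j) (Xj j)) Filter.atTop
      (nhds (fderiv ℝ Φ₀ X₀)) :=
  semiconcave_gradient_convergence_general Ω₀ hopen Φ Φ₀ Xj X₀ hX₀ hXj hXjlim hdiff hdiff₀ hunif C
    hconc
end

section
/- Let u : B_r(X₀) → ℝ be C¹ with ∇u ≠ 0 on B_r(X₀), and suppose two unit vectors e₁, e₂ satisfy ∫_{B_r(X₀)} [1 - (ν·e₁)²] |∇u|² ≤ E₁ and ∫_{B_r(X₀)} [1 - (ν·e₂)²] |∇u|² ≤ E₂, where ν := ∇u/|∇u|, and that ∫_{B_r(X₀)} |∇u|² ≥ c₁ r^n. Then the projective distance satisfies d_{ℝP^n}(e₁, e₂)² ≤ C·(E₁ + E₂)/(c₁ r^n), where d_{ℝP^n}(e₁,e₂) = min{|e₁-e₂|, |e₁+e₂|} and C is a dimensional constant. -/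
open RealInnerProductSpace
open MeasureTheory


lemma tilt_aux {F : Type*} [NormedAddCommGroup F] [InnerProductSpace ℝ F]
    (ν e₁ e₂ : F) (hν : ‖ν‖ = 1) (h1 : ‖e₁‖ = 1) (h2 : ‖e₂‖ = 1) :
    (min ‖e₁ - e₂‖ ‖e₁ + e₂‖) ^ 2 ≤ 4 * (1 - ⟪ν, e₁⟫ ^ 2) + 4 * (1 - ⟪ν, e₂⟫ ^ 2) := by
  have key : ∀ e : F, ‖e‖ = 1 → (min ‖ν - e‖ ‖ν + e‖) ^ 2 ≤ 2 - 2 * ⟪ν, e⟫ ^ 2 := by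
    intro e he
    have hsub : ‖ν - e‖ ^ 2 = 2 - 2 * ⟪ν, e⟫ := by
      rw [norm_sub_sq_real, hν, he]; ring
    have hadd : ‖ν + e‖ ^ 2 = 2 + 2 * ⟪ν, e⟫ := by
      rw [norm_add_sq_real, hν, he]; ring
    have habs : |⟪ν, e⟫| ≤ 1 := by
      have := abs_real_inner_le_norm ν e; rwa [hν, he, one_mul] at this
    have h0 : (0:ℝ) ≤ min ‖ν - e‖ ‖ν + e‖ := le_min (norm_nonneg _) (norm_nonneg _)
    rcases le_total 0 ⟪ν, e⟫ with ht | ht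
    · have hm : min ‖ν - e‖ ‖ν + e‖ ≤ ‖ν - e‖ := min_le_left _ _
      have ht1 : ⟪ν, e⟫ ≤ 1 := (abs_le.mp habs).2
      nlinarith [norm_nonneg (ν - e)]
    · have hm : min ‖ν - e‖ ‖ν + e‖ ≤ ‖ν + e‖ := min_le_right _ _
      have ht1 : -1 ≤ ⟪ν, e⟫ := (abs_le.mp habs).1
      nlinarith [norm_nonneg (ν + e)]
  set a := min ‖ν - e₁‖ ‖ν + e₁‖ with ha
  set b := min ‖ν - e₂‖ ‖ν + e₂‖ with hb
  have ha0 : 0 ≤ a := le_min (norm_nonneg _) (norm_nonneg _)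
  have hb0 : 0 ≤ b := le_min (norm_nonneg _) (norm_nonneg _)
  have hd : min ‖e₁ - e₂‖ ‖e₁ + e₂‖ ≤ a + b := by
    rcases min_cases ‖ν - e₁‖ ‖ν + e₁‖ with ⟨hA, _⟩ | ⟨hA, _⟩ <;>
      rcases min_cases ‖ν - e₂‖ ‖ν + e₂‖ with ⟨hB, _⟩ | ⟨hB, _⟩
    · calc min ‖e₁ - e₂‖ ‖e₁ + e₂‖ ≤ ‖e₁ - e₂‖ := min_le_left _ _
        _ = ‖(ν - e₂) - (ν - e₁)‖ := by congr 1; abel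
        _ ≤ ‖ν - e₂‖ + ‖ν - e₁‖ := norm_sub_le _ _
        _ = a + b := by rw [ha, hb, hA, hB]; try ring
    · calc min ‖e₁ - e₂‖ ‖e₁ + e₂‖ ≤ ‖e₁ + e₂‖ := min_le_right _ _
        _ = ‖(ν + e₂) - (ν - e₁)‖ := by congr 1; abel
        _ ≤ ‖ν + e₂‖ + ‖ν - e₁‖ := norm_sub_le _ _
        _ = a + b := by rw [ha, hb, hA, hB]; try ring
    · calc min ‖e₁ - e₂‖ ‖e₁ + e₂‖ ≤ ‖e₁ + e₂‖ := min_le_right _ _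
        _ = ‖(ν + e₁) - (ν - e₂)‖ := by congr 1; abel
        _ ≤ ‖ν + e₁‖ + ‖ν - e₂‖ := norm_sub_le _ _
        _ = a + b := by rw [ha, hb, hA, hB]; try ring
    · calc min ‖e₁ - e₂‖ ‖e₁ + e₂‖ ≤ ‖e₁ - e₂‖ := min_le_left _ _
        _ = ‖(ν + e₁) - (ν + e₂)‖ := by congr 1; abel
        _ ≤ ‖ν + e₁‖ + ‖ν + e₂‖ := norm_sub_le _ _
        _ = a + b := by rw [ha, hb, hA, hB]; try ring
  have h1' := key e₁ h1
  have h2' := key e₂ h2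
  have hd0 : 0 ≤ min ‖e₁ - e₂‖ ‖e₁ + e₂‖ := le_min (norm_nonneg _) (norm_nonneg _)
  nlinarith [sq_nonneg (a - b)]

/-- Tilt-comparison: if the excesses of `u` with respect to two unit directions
`e₁, e₂` on `B_r(X₀)` are at most `E₁, E₂`, and `∫_{B_r} |∇u|² ≥ c₁ r^n`, then the
projective distance between `e₁` and `e₂` satisfies
`d(e₁,e₂)² ≤ C (E₁+E₂)/(c₁ r^n)`. -/
theorem tilt_comparison (n : ℕ) :
    ∃ C > 0, ∀ (r c₁ E₁ E₂ : ℝ) (X₀ : EuclideanSpace ℝ (Fin (n+1)))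
      (u : EuclideanSpace ℝ (Fin (n+1)) → ℝ)
      (e₁ e₂ : EuclideanSpace ℝ (Fin (n+1))),
      0 < r → 0 < c₁ → ‖e₁‖ = 1 → ‖e₂‖ = 1 →
      ContDiffOn ℝ 1 u (Metric.ball X₀ r) →
      (∀ x ∈ Metric.ball X₀ r, gradient u x ≠ 0) →
      (∫ x in Metric.ball X₀ r,
          (1 - ⟪(‖gradient u x‖⁻¹) • gradient u x, e₁⟫ ^ 2) * ‖gradient u x‖ ^ 2) ≤ E₁ →
      (∫ x in Metric.ball X₀ r,
          (1 - ⟪(‖gradient u x‖⁻¹) • gradient u x, e₂⟫ ^ 2) * ‖gradient u x‖ ^ 2) ≤ E₂ →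
      c₁ * r ^ n ≤ ∫ x in Metric.ball X₀ r, ‖gradient u x‖ ^ 2 →
      (min ‖e₁ - e₂‖ ‖e₁ + e₂‖) ^ 2 ≤ C * (E₁ + E₂) / (c₁ * r ^ n) := by
  refine ⟨4, by norm_num, ?_⟩
  intro r c₁ E₁ E₂ X₀ u e₁ e₂ hr hc₁ he₁ he₂ hu hgrad hE₁ hE₂ hlow
  set B := Metric.ball X₀ r with hB
  set d := min ‖e₁ - e₂‖ ‖e₁ + e₂‖ with hd
  have hd0 : 0 ≤ d := le_min (norm_nonneg _) (norm_nonneg _)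
  set g : EuclideanSpace ℝ (Fin (n+1)) → ℝ := fun x => ‖gradient u x‖ ^ 2 with hg
  set f₁ : EuclideanSpace ℝ (Fin (n+1)) → ℝ :=
    fun x => (1 - ⟪(‖gradient u x‖⁻¹) • gradient u x, e₁⟫ ^ 2) * ‖gradient u x‖ ^ 2 with hf₁
  set f₂ : EuclideanSpace ℝ (Fin (n+1)) → ℝ :=
    fun x => (1 - ⟪(‖gradient u x‖⁻¹) • gradient u x, e₂⟫ ^ 2) * ‖gradient u x‖ ^ 2 with hf₂
  have hBmeas : MeasurableSet B := measurableSet_ball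
  have hpos : 0 < c₁ * r ^ n := by positivity
  -- continuity of gradient on B
  have hgradcont : ContinuousOn (gradient u) B := by
    have h := hu.continuousOn_fderiv_of_isOpen Metric.isOpen_ball le_rfl
    exact (InnerProductSpace.toDual ℝ _).symm.continuous.comp_continuousOn h
  have hgcont : ContinuousOn g B := (hgradcont.norm.pow 2)
  have hνcont : ContinuousOn (fun x => (‖gradient u x‖⁻¹) • gradient u x) B := by
    refine ContinuousOn.smul (ContinuousOn.inv₀ hgradcont.norm ?_) hgradcont
    intro x hx; exact norm_ne_zero_iff.mpr (hgrad x hx)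
  have hf₁cont : ContinuousOn f₁ B := by
    refine ContinuousOn.mul ?_ hgcont
    exact (continuousOn_const.sub ((hνcont.inner continuousOn_const).pow 2))
  have hf₂cont : ContinuousOn f₂ B := by
    refine ContinuousOn.mul ?_ hgcont
    exact (continuousOn_const.sub ((hνcont.inner continuousOn_const).pow 2))
  -- integrability of g
  have hgint : IntegrableOn g B := by
    by_contra h
    rw [integral_undef (by simpa [IntegrableOn] using h)] at hlow
    linarith
  -- unit normal properties
  have hν : ∀ x ∈ B, ‖(‖gradient u x‖⁻¹) • gradient u x‖ = 1 := by
    intro x hx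
    rw [norm_smul, norm_inv, norm_norm,
      inv_mul_cancel₀ (norm_ne_zero_iff.mpr (hgrad x hx))]
  have hbd : ∀ (e : EuclideanSpace ℝ (Fin (n+1))), ‖e‖ = 1 → ∀ x ∈ B,
      0 ≤ 1 - ⟪(‖gradient u x‖⁻¹) • gradient u x, e⟫ ^ 2 ∧
      1 - ⟪(‖gradient u x‖⁻¹) • gradient u x, e⟫ ^ 2 ≤ 1 := by
    intro e he x hx
    have := abs_real_inner_le_norm ((‖gradient u x‖⁻¹) • gradient u x) e
    rw [hν x hx, he, one_mul] at this
    constructor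
    · nlinarith [abs_nonneg ⟪(‖gradient u x‖⁻¹) • gradient u x, e⟫,
        sq_abs ⟪(‖gradient u x‖⁻¹) • gradient u x, e⟫]
    · nlinarith [sq_nonneg ⟪(‖gradient u x‖⁻¹) • gradient u x, e⟫]
  -- integrability of f₁, f₂
  have hfint : ∀ (f : EuclideanSpace ℝ (Fin (n+1)) → ℝ), ContinuousOn f B →
      (∀ x ∈ B, 0 ≤ f x ∧ f x ≤ g x) → IntegrableOn f B := by
    intro f hc hbdd
    refine Integrable.mono hgint (hc.aestronglyMeasurable hBmeas) ?_
    rw [ae_restrict_iff' hBmeas]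
    filter_upwards with x hx
    have := hbdd x hx
    rw [Real.norm_eq_abs, Real.norm_eq_abs, abs_of_nonneg this.1]
    have hg0 : 0 ≤ g x := sq_nonneg _
    rw [abs_of_nonneg hg0]; exact this.2
  have hf₁int : IntegrableOn f₁ B := by
    refine hfint f₁ hf₁cont fun x hx => ?_
    have h := hbd e₁ he₁ x hx
    have hg0 : (0:ℝ) ≤ ‖gradient u x‖ ^ 2 := sq_nonneg _
    constructor
    · exact mul_nonneg h.1 hg0
    · calc f₁ x ≤ 1 * ‖gradient u x‖ ^ 2 := mul_le_mul_of_nonneg_right h.2 hg0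
        _ = g x := by rw [one_mul]
  have hf₂int : IntegrableOn f₂ B := by
    refine hfint f₂ hf₂cont fun x hx => ?_
    have h := hbd e₂ he₂ x hx
    have hg0 : (0:ℝ) ≤ ‖gradient u x‖ ^ 2 := sq_nonneg _
    constructor
    · exact mul_nonneg h.1 hg0
    · calc f₂ x ≤ 1 * ‖gradient u x‖ ^ 2 := mul_le_mul_of_nonneg_right h.2 hg0
        _ = g x := by rw [one_mul]
  -- pointwise inequality: d^2 * g ≤ 4 f₁ + 4 f₂ on B
  have hpt : ∀ x ∈ B, d ^ 2 * g x ≤ 4 * f₁ x + 4 * f₂ x := by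
    intro x hx
    have hkey := tilt_aux ((‖gradient u x‖⁻¹) • gradient u x) e₁ e₂ (hν x hx) he₁ he₂
    have hg0 : 0 ≤ g x := sq_nonneg _
    calc d ^ 2 * g x
        ≤ (4 * (1 - ⟪(‖gradient u x‖⁻¹) • gradient u x, e₁⟫ ^ 2)
          + 4 * (1 - ⟪(‖gradient u x‖⁻¹) • gradient u x, e₂⟫ ^ 2)) * g x :=
          mul_le_mul_of_nonneg_right hkey hg0
      _ = 4 * f₁ x + 4 * f₂ x := by rw [hf₁, hf₂]; ring
  -- integrate
  have hint : d ^ 2 * ∫ x in B, g x ≤ 4 * E₁ + 4 * E₂ := by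
    have h1 : ∫ x in B, d ^ 2 * g x ≤ ∫ x in B, (4 * f₁ x + 4 * f₂ x) := by
      refine setIntegral_mono_on (hgint.const_mul _) ?_ hBmeas hpt
      exact ((hf₁int.const_mul 4).add (hf₂int.const_mul 4))
    rw [integral_const_mul] at h1
    rw [integral_add (hf₁int.const_mul 4) (hf₂int.const_mul 4),
      integral_const_mul, integral_const_mul] at h1
    linarith
  have hfin : d ^ 2 * (c₁ * r ^ n) ≤ 4 * (E₁ + E₂) := by
    have := mul_le_mul_of_nonneg_left hlow (by positivity : (0:ℝ) ≤ d ^ 2)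
    linarith
  rw [le_div_iff₀ hpos]
  linarith
end
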